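/- arXiv:1604.01615 — 2 statements merged into one kernel-verified Lean document; each statement's English description precedes it below -/
import Mathlib

section
/- Let R be a commutative ring and let x, y ∈ R satisfy x² = 0. Then (1 + x·y)·(1 − x·y) = 1, and in the ring of 2×2 matrices over R the commutator identity !![1, x; 0, 1] · !![1, 0; y, 1] · !![1, −x; 0, 1] · !![1, 0; −y, 1] = !![1 + x·y, 0; 0, 1 − x·y] · !![1, 0; x·y², 1] holds. -/
theorem upper_lower_commutator_fin_two {R : Type*} [CommRing R] (x y : R) :
    (!![1, x; 0, 1] : Matrix (Fin 2) (Fin 2) R) * !![1, 0; y, 1] * !![1, -x; 0, 1] *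
        !![1, 0; -y, 1] =
      !![1 + x * y + x ^ 2 * y ^ 2, -(x ^ 2 * y); x * y ^ 2, 1 - x * y] := by
  simp only [Matrix.mul_fin_two]
  ring_nf

theorem stmt_1 {R : Type*} [CommRing R] (x y : R) (hx : x ^ 2 = 0) :
    (1 + x * y) * (1 - x * y) = 1 ∧
      (!![1, x; 0, 1] : Matrix (Fin 2) (Fin 2) R) * !![1, 0; y, 1] *
          !![1, -x; 0, 1] * !![1, 0; -y, 1] =
        !![1 + x * y, 0; 0, 1 - x * y] * !![1, 0; x * y ^ 2, 1] := by
  have hcorner : (1 - x * y) * (x * y ^ 2) = x * y ^ 2 := by linear_combination -y ^ 3 * hx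
  refine ⟨by linear_combination -y ^ 2 * hx, ?_⟩
  rw [upper_lower_commutator_fin_two, Matrix.mul_fin_two, hcorner, hx]
  simp
end

section
/- Let R be a nontrivial commutative Artinian local ring, n a natural number, and d : Fin n → R. Then the following are equivalent: (i) every invertible n×n matrix g over R (element of GL_n(R)) whose underlying matrix commutes with diagonal(d) is a diagonal matrix; (ii) d i − d j is a unit of R for every pair i ≠ j in Fin n. -/
/-!
Comparing `(i, j)` entries, `g` commutes with `diagonal d` iff `g i j * (d j - d i) = 0` for all
`i, j`; so unit differences force `g` to be diagonal. Conversely, in an Artinian ring a non-unit is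
a zero divisor: if `c * (d i - d j) = 0` with `c ≠ 0`, the transvection `1 + c • E i j` is a
non-diagonal element of `GL_n(R)` commuting with `diagonal d`.
-/

namespace Matrix

variable {n R : Type*} [DecidableEq n] [CommRing R]

theorem mul_diagonal_eq_diagonal_mul_iff [Fintype n] {A : Matrix n n R} {d : n → R} :
    A * diagonal d = diagonal d * A ↔ ∀ i j, A i j * (d j - d i) = 0 := by
  simp only [← Matrix.ext_iff, mul_diagonal, diagonal_mul, mul_sub, sub_eq_zero, mul_comm]

theorem isDiag_of_mul_diagonal_eq_diagonal_mul [Fintype n] {A : Matrix n n R} {d : n → R}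
    (hd : ∀ i j, i ≠ j → IsUnit (d i - d j)) (hA : A * diagonal d = diagonal d * A) :
    A.IsDiag := fun i j hij =>
  (hd j i hij.symm).mul_left_eq_zero.mp (mul_diagonal_eq_diagonal_mul_iff.mp hA i j)

theorem transvection_mul_diagonal_eq_diagonal_mul [Fintype n] {i j : n} {c : R} {d : n → R}
    (hc : c * (d i - d j) = 0) :
    transvection i j c * diagonal d = diagonal d * transvection i j c := by
  refine mul_diagonal_eq_diagonal_mul_iff.mpr fun a b => ?_
  rcases eq_or_ne a b with rfl | hab
  · simp
  · rw [transvection, add_apply, one_apply_ne hab, zero_add, single_apply]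
    split_ifs with h
    · obtain ⟨rfl, rfl⟩ := h
      linear_combination -hc
    · exact zero_mul _

theorem transvection_apply_of_ne {i j : n} (hij : i ≠ j) (c : R) :
    transvection i j c i j = c := by
  simp [transvection, hij]

end Matrix

theorem IsArtinianRing.exists_ne_zero_mul_eq_zero_of_not_isUnit {R : Type*} [CommRing R]
    [IsArtinianRing R] {x : R} (hx : ¬IsUnit x) : ∃ c ≠ 0, c * x = 0 := by
  obtain ⟨c, hcx, hc⟩ := notMem_nonZeroDivisors_iff_right.mp
    fun h => hx (isUnit_of_mem_nonZeroDivisors h)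
  exact ⟨c, hc, hcx⟩

theorem stmt_3_general {R : Type*} [CommRing R] [IsArtinianRing R]
    {n : ℕ} (d : Fin n → R) :
    (∀ g : Matrix.GeneralLinearGroup (Fin n) R,
        (g : Matrix (Fin n) (Fin n) R) * Matrix.diagonal d =
          Matrix.diagonal d * (g : Matrix (Fin n) (Fin n) R) →
        (g : Matrix (Fin n) (Fin n) R).IsDiag) ↔
      (∀ i j : Fin n, i ≠ j → IsUnit (d i - d j)) := by
  refine ⟨fun hdiag i j hij => ?_, fun hd g => Matrix.isDiag_of_mul_diagonal_eq_diagonal_mul hd⟩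
  by_contra hu
  obtain ⟨c, hc0, hc⟩ := IsArtinianRing.exists_ne_zero_mul_eq_zero_of_not_isUnit hu
  let g := Matrix.GeneralLinearGroup.mk'' (Matrix.transvection i j c)
    (by simp [Matrix.det_transvection_of_ne _ _ hij])
  have hg : (g : Matrix (Fin n) (Fin n) R).IsDiag :=
    hdiag g (Matrix.transvection_mul_diagonal_eq_diagonal_mul hc)
  exact hc0 ((Matrix.transvection_apply_of_ne hij c).symm.trans (hg hij))

theorem stmt_3 {R : Type*} [CommRing R] [IsArtinianRing R] [IsLocalRing R]
    {n : ℕ} (d : Fin n → R) :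
    (∀ g : Matrix.GeneralLinearGroup (Fin n) R,
        (g : Matrix (Fin n) (Fin n) R) * Matrix.diagonal d =
          Matrix.diagonal d * (g : Matrix (Fin n) (Fin n) R) →
        (g : Matrix (Fin n) (Fin n) R).IsDiag) ↔
      (∀ i j : Fin n, i ≠ j → IsUnit (d i - d j)) :=
  stmt_3_general d
end
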